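/- (Translation invariance of the information dimension rate.) Let {X_t, t ∈ ℤ} be a stationary L-variate real-valued process and let {c_t, t ∈ ℤ} be a sequence of deterministic vectors in ℝ^L. Then d̄({X_t + c_t}) = d̄({X_t}) and d̲({X_t + c_t}) = d̲({X_t}), where the upper and lower information dimension rates of the (possibly non-stationary) process {X_t + c_t} are defined with limsup over k in place of the limit over k. -/

import Mathlib

open MeasureTheory ProbabilityTheory Filter Set
open scoped ENNReal NNReal Topology

/-- Uniform quantization with step size `1/m`: `[x]_m = ⌊m x⌋ / m`. -/
noncomputable def quant (m : ℕ) (x : ℝ) : ℝ := ⌊(m : ℝ) * x⌋ / m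

/-- Shannon entropy (in nats) of a random element `X`, valued in `[0,∞]`. -/
noncomputable def entropy {Ω S : Type*} [MeasurableSpace Ω] (μ : Measure Ω) (X : Ω → S) : ℝ≥0∞ :=
  ∑' s : S, ENNReal.ofReal (Real.negMulLog (μ (X ⁻¹' {s})).toReal)

/-- Componentwise quantization of the block `X_1^k` of an `ι`-variate process. -/
noncomputable def blockQ {Ω ι : Type*} (m k : ℕ) (X : ℤ → Ω → ι → ℝ) :
    Ω → Fin k → ι → ℝ :=
  fun ω j i => quant m (X ((j : ℤ) + 1) ω i)

/-- Entropy rate `H̄_m` of the process quantized with step `1/m`; by stationarity and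
subadditivity of entropy, the limit over the block length `k` equals the infimum. -/
noncomputable def entRate {Ω ι : Type*} [MeasurableSpace Ω] (μ : Measure Ω)
    (X : ℤ → Ω → ι → ℝ) (m : ℕ) : ℝ≥0∞ :=
  ⨅ k : ℕ, entropy μ (blockQ m (k + 1) X) / ((k : ℝ≥0∞) + 1)

/-- Upper information dimension rate `d̄({X_t}) = limsup_m H̄_m / log m`. -/
noncomputable def dimRateUpper {Ω ι : Type*} [MeasurableSpace Ω] (μ : Measure Ω)
    (X : ℤ → Ω → ι → ℝ) : ℝ≥0∞ :=
  Filter.limsup (fun m : ℕ => entRate μ X m / ENNReal.ofReal (Real.log m)) Filter.atTop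

/-- Lower information dimension rate `d̲({X_t}) = liminf_m H̄_m / log m`. -/
noncomputable def dimRateLower {Ω ι : Type*} [MeasurableSpace Ω] (μ : Measure Ω)
    (X : ℤ → Ω → ι → ℝ) : ℝ≥0∞ :=
  Filter.liminf (fun m : ℕ => entRate μ X m / ENNReal.ofReal (Real.log m)) Filter.atTop

/-- Stationarity: every shift of the process has the same (joint) law. -/
def Stationary {Ω ι : Type*} [MeasurableSpace Ω] (μ : Measure Ω) (X : ℤ → Ω → ι → ℝ) : Prop :=
  ∀ n : ℤ, μ.map (fun ω (t : ℤ) => X (t + n) ω) = μ.map (fun ω (t : ℤ) => X t ω)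

/-- Quantized entropy rate for a possibly non-stationary process, with the limit over the
block length replaced by a limit superior. -/
noncomputable def entRateSup {Ω ι : Type*} [MeasurableSpace Ω] (μ : Measure Ω)
    (X : ℤ → Ω → ι → ℝ) (m : ℕ) : ℝ≥0∞ :=
  Filter.limsup (fun k : ℕ => entropy μ (blockQ m (k + 1) X) / ((k : ℝ≥0∞) + 1)) Filter.atTop

/-- entropy term of a single mass. -/
noncomputable def ee (p : ℝ≥0∞) : ℝ≥0∞ := ENNReal.ofReal (Real.negMulLog p.toReal)

lemma ee_zero : ee 0 = 0 := by simp [ee, Real.negMulLog]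

lemma entropy_eq {Ω S : Type*} [MeasurableSpace Ω] (μ : Measure Ω) (X : Ω → S) :
    entropy μ X = ∑' s : S, ee (μ (X ⁻¹' {s})) := rfl

/-- Sub-lemma S : subadditivity of `ee` along countable sums (with total mass ≤ 1). -/
lemma ee_tsum_le {ι : Type*} [Countable ι] (P : ι → ℝ≥0∞) (h1 : (∑' i, P i) ≤ 1) :
    ee (∑' i, P i) ≤ ∑' i, ee (P i) := by
  set p : ℝ≥0∞ := ∑' i, P i with hp
  have hpt : p ≠ ∞ := (lt_of_le_of_lt h1 (by norm_num)).ne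
  have hPt : ∀ i, P i ≠ ∞ := fun i => (lt_of_le_of_lt (le_trans (ENNReal.le_tsum i) h1) (by norm_num)).ne
  have hsum : p.toReal = ∑' i, (P i).toReal := ENNReal.tsum_toReal_eq hPt
  have hsmm : Summable (fun i => (P i).toReal) := ENNReal.summable_toReal hpt
  set c : ℝ := - Real.log p.toReal with hc
  have hc0 : 0 ≤ c := by
    rcases eq_or_lt_of_le (zero_le : 0 ≤ p) with h0 | h0
    · simp [hc, ← h0]
    · have : p.toReal ≤ 1 := by
        rw [show (1:ℝ) = (1:ℝ≥0∞).toReal by simp]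
        exact ENNReal.toReal_mono (by norm_num) h1
      have := Real.log_nonpos (le_of_lt (ENNReal.toReal_pos h0.ne' hpt)) this
      linarith
  have key : ee p = ENNReal.ofReal (∑' i, (P i).toReal * c) := by
    rw [ee]
    congr 1
    rw [tsum_mul_right, ← hsum, Real.negMulLog]
    simp only [hc]
    ring
  rw [key, ENNReal.ofReal_tsum_of_nonneg (fun i => mul_nonneg ENNReal.toReal_nonneg hc0)
    (hsmm.mul_right c)]
  apply ENNReal.tsum_le_tsum
  intro i
  apply ENNReal.ofReal_le_ofReal
  rcases eq_or_lt_of_le (zero_le : 0 ≤ P i) with h0 | h0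
  · simp [← h0, Real.negMulLog]
  · have hPpos : 0 < (P i).toReal := ENNReal.toReal_pos h0.ne' (hPt i)
    have hle : (P i).toReal ≤ p.toReal := ENNReal.toReal_mono hpt (ENNReal.le_tsum i)
    have : c ≤ - Real.log (P i).toReal := by
      have := Real.log_le_log hPpos hle
      simp only [hc]; linarith
    calc (P i).toReal * c ≤ (P i).toReal * (- Real.log (P i).toReal) :=
          mul_le_mul_of_nonneg_left this (le_of_lt hPpos)
      _ = Real.negMulLog (P i).toReal := by rw [Real.negMulLog]; ring

/-- Sub-lemma B' (real): entropy of a finite decomposition. -/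
lemma sum_negMulLog_le {F : Type*} [Fintype F] (q : F → ℝ) (h0 : ∀ e, 0 ≤ q e) :
    ∑ e, Real.negMulLog (q e) ≤
      Real.negMulLog (∑ e, q e) + (∑ e, q e) * Real.log (Fintype.card F) := by
  rcases isEmpty_or_nonempty F with hF | hF
  · simp [Real.negMulLog]
  set N : ℝ := (Fintype.card F : ℝ) with hN
  have hNpos : 0 < N := by
    have := Fintype.card_pos (α := F); positivity
  set p : ℝ := ∑ e, q e with hp
  have hppos : 0 ≤ p := Finset.sum_nonneg (fun e _ => h0 e)
  rcases eq_or_lt_of_le hppos with h0p | h0p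
  · have hq : ∀ e, q e = 0 := by
      intro e
      have := Finset.sum_eq_zero_iff_of_nonneg (fun e _ => h0 e) |>.mp h0p.symm
      exact this e (Finset.mem_univ e)
    have hq' : ∀ e, Real.negMulLog (q e) = 0 := fun e => by rw [hq e]; simp [Real.negMulLog]
    rw [Finset.sum_congr rfl (fun e _ => hq' e), ← h0p]
    simp [Real.negMulLog]
  have key : ∀ e, Real.negMulLog (q e) ≤ q e * (Real.log N - Real.log p) + (p / N - q e) := by
    intro e
    rcases eq_or_lt_of_le (h0 e) with hq0 | hq0
    · rw [← hq0]
      simp [Real.negMulLog]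
      positivity
    · have harg : 0 < p / (N * q e) := by positivity
      have hls := Real.log_le_sub_one_of_pos harg
      have hlog : Real.log (p / (N * q e)) = Real.log p - Real.log N - Real.log (q e) := by
        rw [Real.log_div (by positivity) (by positivity), Real.log_mul (by positivity) (by positivity)]
        ring
      rw [hlog] at hls
      have hmul : q e * (Real.log p - Real.log N - Real.log (q e)) ≤ q e * (p / (N * q e) - 1) :=
        mul_le_mul_of_nonneg_left hls (le_of_lt hq0)
      have hqq : q e * (p / (N * q e) - 1) = p / N - q e := by
        field_simp
      rw [hqq] at hmul
      rw [Real.negMulLog]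
      nlinarith
  have hcardp : (Fintype.card F : ℝ) * (p / N) = p := by
    rw [hN] at hNpos ⊢
    field_simp
  calc ∑ e, Real.negMulLog (q e)
      ≤ ∑ e, (q e * (Real.log N - Real.log p) + (p / N - q e)) :=
        Finset.sum_le_sum (fun e _ => key e)
    _ = (Real.log N - Real.log p) * p + ((Fintype.card F : ℝ) * (p / N) - p) := by
        rw [Finset.sum_add_distrib]
        simp only [Finset.sum_sub_distrib, ← Finset.sum_mul, Finset.sum_const, Finset.card_univ,
          nsmul_eq_mul]
        rw [← hp]
        ring
    _ = Real.negMulLog p + p * Real.log N := by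
        rw [Real.negMulLog, hcardp]
        ring

/-- Partition of a measurable set along the countably many values of `Z`. -/
lemma meas_partition {Ω T : Type*} [MeasurableSpace Ω] (μ : Measure Ω) {Z : Ω → T}
    {D : Set T} (hD : D.Countable) (hr : ∀ ω, Z ω ∈ D)
    (hm : ∀ t, MeasurableSet (Z ⁻¹' {t})) {W : Set Ω} (hW : MeasurableSet W) :
    μ W = ∑' t : D, μ (W ∩ Z ⁻¹' {(t : T)}) := by
  have : Countable D := hD.to_subtype
  rw [← measure_iUnion (f := fun t : D => W ∩ Z ⁻¹' {(t : T)})]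
  · congr 1
    ext ω; constructor
    · intro hω; exact mem_iUnion.2 ⟨⟨Z ω, hr ω⟩, hω, rfl⟩
    · intro hω; rcases mem_iUnion.1 hω with ⟨t, ht, _⟩; exact ht
  · intro t u htu
    refine Set.disjoint_left.2 (fun ω hω hω' => htu ?_)
    have h1 : Z ω = (t : T) := hω.2
    have h2 : Z ω = (u : T) := hω'.2
    exact Subtype.ext (h1 ▸ h2)
  · intro t; exact hW.inter (hm t)

lemma entropy_eq_tsum_subtype {Ω S : Type*} [MeasurableSpace Ω] (μ : Measure Ω) (Z : Ω → S)
    {D : Set S} (hr : ∀ ω, Z ω ∈ D) :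
    entropy μ Z = ∑' s : D, ee (μ (Z ⁻¹' {(s : S)})) := by
  rw [entropy_eq]
  refine (tsum_subtype_eq_of_support_subset ?_).symm
  intro s hs
  by_contra hsD
  apply hs
  have : Z ⁻¹' {s} = ∅ := by
    ext ω; simp only [mem_preimage, mem_singleton_iff, mem_empty_iff_false, iff_false]
    intro h; exact hsD (h ▸ hr ω)
  simp [this, ee_zero]

/-- Lemma A: data processing, `H(f ∘ Z) ≤ H(Z)` for countably-valued `Z`. -/
lemma entropy_comp_le {Ω T S : Type*} [MeasurableSpace Ω] (μ : Measure Ω) [IsProbabilityMeasure μ]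
    (Z : Ω → T) (f : T → S) {D : Set T} (hD : D.Countable) (hr : ∀ ω, Z ω ∈ D)
    (hm : ∀ t, MeasurableSet (Z ⁻¹' {t})) :
    entropy μ (fun ω => f (Z ω)) ≤ entropy μ Z := by
  have hDc : Countable D := hD.to_subtype
  have hr' : ∀ ω, f (Z ω) ∈ f '' D := fun ω => ⟨Z ω, hr ω, rfl⟩
  rw [entropy_eq_tsum_subtype μ _ hr', entropy_eq_tsum_subtype μ Z hr]
  have hparts : ∀ s : f '' D, μ ((fun ω => f (Z ω)) ⁻¹' {(s : S)}) =
      ∑' t : {t : D // f (t : T) = (s : S)}, μ (Z ⁻¹' {((t : D) : T)}) := by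
    intro s
    rw [← measure_iUnion (f := fun t : {t : D // f (t : T) = (s : S)} => Z ⁻¹' {((t : D) : T)})]
    · congr 1
      ext ω
      simp only [mem_preimage, mem_singleton_iff, mem_iUnion]
      constructor
      · intro h; exact ⟨⟨⟨Z ω, hr ω⟩, h⟩, rfl⟩
      · rintro ⟨t, ht⟩; rw [ht]; exact t.2
    · intro t u htu
      refine Set.disjoint_left.2 (fun ω hω hω' => htu ?_)
      have h1 : Z ω = ((t : D) : T) := hω
      have h2 : Z ω = ((u : D) : T) := hω'
      exact Subtype.ext (Subtype.ext (h1 ▸ h2))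
    · intro t; exact hm _
  calc ∑' s : f '' D, ee (μ ((fun ω => f (Z ω)) ⁻¹' {(s : S)}))
      ≤ ∑' s : f '' D, ∑' t : {t : D // f (t : T) = (s : S)}, ee (μ (Z ⁻¹' {((t : D) : T)})) := by
        apply ENNReal.tsum_le_tsum
        intro s
        rw [hparts s]
        apply ee_tsum_le
        rw [← hparts s]
        exact prob_le_one
    _ = ∑' x : (Σ s : f '' D, {t : D // f (t : T) = (s : S)}), ee (μ (Z ⁻¹' {((x.2 : D) : T)})) :=
        (ENNReal.tsum_sigma (β := fun s : f '' D => {t : D // f (t : T) = (s : S)})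
          (fun s t => ee (μ (Z ⁻¹' {((t : D) : T)})))).symm
    _ ≤ ∑' t : D, ee (μ (Z ⁻¹' {(t : T)})) := by
        apply ENNReal.tsum_comp_le_tsum_of_injective
          (f := fun x : (Σ s : f '' D, {t : D // f (t : T) = (s : S)}) => (x.2 : D))
        rintro ⟨s, t⟩ ⟨s', t'⟩ h
        simp only at h
        have hs : s = s' := by
          apply Subtype.ext
          rw [← t.2, ← t'.2, h]
        subst hs
        simp only [Sigma.mk.inj_iff, heq_eq_eq, true_and]
        exact Subtype.ext h

lemma ee_sum_fin_le {F : Type*} [Fintype F] [Nonempty F] (q : F → ℝ≥0∞)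
    (h1 : ∀ e, q e ≤ 1) (hp : ∑ e, q e ≤ 1) :
    ∑ e, ee (q e) ≤ ee (∑ e, q e) +
      ENNReal.ofReal ((∑ e, q e).toReal * Real.log (Fintype.card F)) := by
  have hne : ∀ e, q e ≠ ∞ := fun e => (lt_of_le_of_lt (h1 e) (by norm_num)).ne
  have hpne : (∑ e, q e) ≠ ∞ := (lt_of_le_of_lt hp (by norm_num)).ne
  have hqR1 : ∀ e, (q e).toReal ≤ 1 := by
    intro e
    rw [show (1:ℝ) = (1:ℝ≥0∞).toReal by simp]
    exact ENNReal.toReal_mono (by norm_num) (h1 e)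
  have hnn : ∀ e, 0 ≤ Real.negMulLog (q e).toReal :=
    fun e => Real.negMulLog_nonneg ENNReal.toReal_nonneg (hqR1 e)
  have hsum : (∑ e, q e).toReal = ∑ e, (q e).toReal := ENNReal.toReal_sum (fun e _ => hne e)
  have hlogN : 0 ≤ Real.log (Fintype.card F) := by
    apply Real.log_nonneg
    have := Fintype.card_pos (α := F)
    exact_mod_cast this
  calc ∑ e, ee (q e) = ENNReal.ofReal (∑ e, Real.negMulLog (q e).toReal) := by
        rw [ENNReal.ofReal_sum_of_nonneg (fun e _ => hnn e)]
        rfl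
    _ ≤ ENNReal.ofReal (Real.negMulLog (∑ e, (q e).toReal) +
          (∑ e, (q e).toReal) * Real.log (Fintype.card F)) :=
        ENNReal.ofReal_le_ofReal (sum_negMulLog_le _ (fun e => ENNReal.toReal_nonneg))
    _ = ee (∑ e, q e) + ENNReal.ofReal ((∑ e, q e).toReal * Real.log (Fintype.card F)) := by
        rw [← hsum, ENNReal.ofReal_add ?_ ?_]
        · rfl
        · rw [hsum]
          exact Real.negMulLog_nonneg (by positivity)
            (by rw [← hsum]; rw [show (1:ℝ) = (1:ℝ≥0∞).toReal by simp];
                exact ENNReal.toReal_mono (by norm_num) hp)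
        · exact mul_nonneg ENNReal.toReal_nonneg hlogN

/-- Lemma B: adjoining a finite-valued variable costs at most `log |F|`. -/
lemma entropy_pair_le {Ω T F : Type*} [MeasurableSpace Ω] (μ : Measure Ω) [IsProbabilityMeasure μ]
    [Fintype F] [Nonempty F] (Z : Ω → T) (E : Ω → F) {D : Set T} (hD : D.Countable)
    (hr : ∀ ω, Z ω ∈ D) (hmZ : ∀ t, MeasurableSet (Z ⁻¹' {t}))
    (hmE : ∀ e, MeasurableSet (E ⁻¹' {e})) :
    entropy μ (fun ω => (Z ω, E ω)) ≤
      entropy μ Z + ENNReal.ofReal (Real.log (Fintype.card F)) := by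
  have hDc : Countable D := hD.to_subtype
  have hpre : ∀ t : T, ∀ e : F, (fun ω => (Z ω, E ω)) ⁻¹' {(t, e)} = Z ⁻¹' {t} ∩ E ⁻¹' {e} := by
    intro t e; ext ω; simp [Prod.ext_iff]
  have step1 : entropy μ (fun ω => (Z ω, E ω)) =
      ∑' t : D, ∑ e : F, ee (μ (Z ⁻¹' {(t : T)} ∩ E ⁻¹' {e})) := by
    rw [entropy_eq]
    have h1 : ∑' s : T × F, ee (μ ((fun ω => (Z ω, E ω)) ⁻¹' {s})) =
        ∑' t : T, ∑' e : F, ee (μ (Z ⁻¹' {t} ∩ E ⁻¹' {e})) := by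
      rw [← ENNReal.tsum_prod (f := fun t e => ee (μ (Z ⁻¹' {t} ∩ E ⁻¹' {e})))]
      apply tsum_congr
      intro s
      rw [← hpre s.1 s.2]
    rw [h1]
    rw [← tsum_subtype_eq_of_support_subset (s := D)]
    · exact tsum_congr (fun t => tsum_fintype _)
    · intro t ht
      by_contra htD
      apply ht
      have : Z ⁻¹' {t} = ∅ := by
        ext ω; simp only [mem_preimage, mem_singleton_iff, mem_empty_iff_false, iff_false]
        intro h; exact htD (h ▸ hr ω)
      simp [this, ee_zero]
  have hdecomp : ∀ t : T, μ (Z ⁻¹' {t}) = ∑ e : F, μ (Z ⁻¹' {t} ∩ E ⁻¹' {e}) := by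
    intro t
    rw [← tsum_fintype (L := SummationFilter.unconditional F), ← measure_iUnion]
    · congr 1
      ext ω
      simp only [mem_preimage, mem_singleton_iff, mem_iUnion, mem_inter_iff]
      exact ⟨fun h => ⟨E ω, h, rfl⟩, fun ⟨e, h, _⟩ => h⟩
    · intro e e' hee
      refine Set.disjoint_left.2 (fun ω hω hω' => hee ?_)
      rw [← hω.2, ← hω'.2]
    · intro e; exact (hmZ t).inter (hmE e)
  rw [step1, entropy_eq_tsum_subtype μ Z hr]
  calc ∑' t : D, ∑ e : F, ee (μ (Z ⁻¹' {(t : T)} ∩ E ⁻¹' {e}))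
      ≤ ∑' t : D, (ee (μ (Z ⁻¹' {(t : T)})) +
          ENNReal.ofReal ((μ (Z ⁻¹' {(t : T)})).toReal * Real.log (Fintype.card F))) := by
        apply ENNReal.tsum_le_tsum
        intro t
        have := ee_sum_fin_le (fun e => μ (Z ⁻¹' {(t : T)} ∩ E ⁻¹' {e}))
          (fun e => prob_le_one) (by rw [← hdecomp]; exact prob_le_one)
        rw [← hdecomp] at this
        exact this
    _ = (∑' t : D, ee (μ (Z ⁻¹' {(t : T)}))) +
          ∑' t : D, ENNReal.ofReal ((μ (Z ⁻¹' {(t : T)})).toReal * Real.log (Fintype.card F)) :=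
        ENNReal.tsum_add
    _ ≤ (∑' t : D, ee (μ (Z ⁻¹' {(t : T)}))) + ENNReal.ofReal (Real.log (Fintype.card F)) := by
        gcongr
        have hlogN : 0 ≤ Real.log (Fintype.card F) := by
          apply Real.log_nonneg
          have := Fintype.card_pos (α := F)
          exact_mod_cast this
        calc ∑' t : D, ENNReal.ofReal ((μ (Z ⁻¹' {(t : T)})).toReal * Real.log (Fintype.card F))
            = ∑' t : D, ENNReal.ofReal (Real.log (Fintype.card F)) * μ (Z ⁻¹' {(t : T)}) := by
              apply tsum_congr
              intro t
              rw [mul_comm ((μ (Z ⁻¹' {(t : T)})).toReal), ENNReal.ofReal_mul hlogN,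
                ENNReal.ofReal_toReal (measure_ne_top μ _)]
          _ = ENNReal.ofReal (Real.log (Fintype.card F)) * ∑' t : D, μ (Z ⁻¹' {(t : T)}) :=
              ENNReal.tsum_mul_left
          _ ≤ ENNReal.ofReal (Real.log (Fintype.card F)) * 1 := by
              gcongr
              have := meas_partition μ hD hr hmZ (MeasurableSet.univ) (W := univ)
              simp only [univ_inter] at this
              rw [← this]
              exact prob_le_one
          _ = ENNReal.ofReal (Real.log (Fintype.card F)) := mul_one _

/-- Lemma C: subadditivity of joint entropy. -/
lemma entropy_pair_le_add {Ω T U : Type*} [MeasurableSpace Ω] (μ : Measure Ω)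
    [IsProbabilityMeasure μ] (A : Ω → T) (B : Ω → U) {DA : Set T} {DB : Set U}
    (hDA : DA.Countable) (hDB : DB.Countable) (hrA : ∀ ω, A ω ∈ DA) (hrB : ∀ ω, B ω ∈ DB)
    (hmA : ∀ t, MeasurableSet (A ⁻¹' {t})) (hmB : ∀ u, MeasurableSet (B ⁻¹' {u})) :
    entropy μ (fun ω => (A ω, B ω)) ≤ entropy μ A + entropy μ B := by
  have hDAc : Countable DA := hDA.to_subtype
  have hDBc : Countable DB := hDB.to_subtype
  set p : DA → DB → ℝ≥0∞ := fun t u => μ (A ⁻¹' {(t : T)} ∩ B ⁻¹' {(u : U)}) with hpdef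
  set a : DA → ℝ≥0∞ := fun t => μ (A ⁻¹' {(t : T)}) with hadef
  set b : DB → ℝ≥0∞ := fun u => μ (B ⁻¹' {(u : U)}) with hbdef
  have ha : ∀ t, a t = ∑' u, p t u := fun t => meas_partition μ hDB hrB hmB (hmA (t : T))
  have hb : ∀ u, b u = ∑' t, p t u := by
    intro u
    show μ (B ⁻¹' {(u : U)}) = _
    rw [meas_partition μ hDA hrA hmA (hmB (u : U))]
    exact tsum_congr (fun t => by rw [inter_comm])
  have hA1 : ∑' t, a t = 1 := by
    have := meas_partition μ hDA hrA hmA (MeasurableSet.univ) (W := univ)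
    simp only [univ_inter] at this
    rw [← this]
    exact measure_univ
  have hB1 : ∑' u, b u = 1 := by
    have := meas_partition μ hDB hrB hmB (MeasurableSet.univ) (W := univ)
    simp only [univ_inter] at this
    rw [← this]
    exact measure_univ
  -- rewrite the pair entropy
  have step1 : entropy μ (fun ω => (A ω, B ω)) = ∑' t : DA, ∑' u : DB, ee (p t u) := by
    rw [entropy_eq]
    have h1 : ∑' s : T × U, ee (μ ((fun ω => (A ω, B ω)) ⁻¹' {s})) =
        ∑' t : T, ∑' u : U, ee (μ (A ⁻¹' {t} ∩ B ⁻¹' {u})) := by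
      rw [← ENNReal.tsum_prod (f := fun t u => ee (μ (A ⁻¹' {t} ∩ B ⁻¹' {u})))]
      apply tsum_congr
      intro s
      congr 1
      congr 1
      ext ω; simp [Prod.ext_iff]
    rw [h1, ← tsum_subtype_eq_of_support_subset (s := DA)]
    · apply tsum_congr
      intro t
      rw [← tsum_subtype_eq_of_support_subset (s := DB)]
      intro u hu
      by_contra huD
      apply hu
      have : B ⁻¹' {u} = ∅ := by
        ext ω; simp only [mem_preimage, mem_singleton_iff, mem_empty_iff_false, iff_false]
        intro h; exact huD (h ▸ hrB ω)
      simp [this, ee_zero]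
    · intro t ht
      by_contra htD
      apply ht
      have : A ⁻¹' {t} = ∅ := by
        ext ω; simp only [mem_preimage, mem_singleton_iff, mem_empty_iff_false, iff_false]
        intro h; exact htD (h ▸ hrA ω)
      simp [this, ee_zero]
  rw [step1, entropy_eq_tsum_subtype μ A hrA, entropy_eq_tsum_subtype μ B hrB]
  -- pointwise Gibbs bound
  have hfin : ∀ (t : DA) (u : DB), p t u ≠ ∞ := fun t u => measure_ne_top μ _
  have hafin : ∀ t, a t ≠ ∞ := fun t => measure_ne_top μ _
  have hbfin : ∀ u, b u ≠ ∞ := fun u => measure_ne_top μ _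
  have key : ∀ (t : DA) (u : DB), ee (p t u) + p t u ≤
      ENNReal.ofReal ((p t u).toReal * (- Real.log (a t).toReal)) +
      ENNReal.ofReal ((p t u).toReal * (- Real.log (b u).toReal)) + a t * b u := by
    intro t u
    rcases eq_or_lt_of_le (zero_le : 0 ≤ p t u) with h0 | h0
    · rw [← h0, ee_zero]
      simp
    · have hpR : 0 < (p t u).toReal := ENNReal.toReal_pos h0.ne' (hfin t u)
      have hpa : p t u ≤ a t := measure_mono inter_subset_left
      have hpb : p t u ≤ b u := measure_mono inter_subset_right
      have haR : (p t u).toReal ≤ (a t).toReal := ENNReal.toReal_mono (hafin t) hpa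
      have hbR : (p t u).toReal ≤ (b u).toReal := ENNReal.toReal_mono (hbfin u) hpb
      have ha1 : (a t).toReal ≤ 1 := by
        rw [show (1:ℝ) = (1:ℝ≥0∞).toReal by simp]
        exact ENNReal.toReal_mono (by norm_num) prob_le_one
      have hb1 : (b u).toReal ≤ 1 := by
        rw [show (1:ℝ) = (1:ℝ≥0∞).toReal by simp]
        exact ENNReal.toReal_mono (by norm_num) prob_le_one
      have hp1 : (p t u).toReal ≤ 1 := le_trans haR ha1
      have hreal : Real.negMulLog (p t u).toReal + (p t u).toReal ≤
          (p t u).toReal * (- Real.log (a t).toReal) +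
          (p t u).toReal * (- Real.log (b u).toReal) + (a t).toReal * (b u).toReal := by
        have haRp : 0 < (a t).toReal := lt_of_lt_of_le hpR haR
        have hbRp : 0 < (b u).toReal := lt_of_lt_of_le hpR hbR
        have harg : 0 < (a t).toReal * (b u).toReal / (p t u).toReal :=
          div_pos (mul_pos haRp hbRp) hpR
        have hls := Real.log_le_sub_one_of_pos harg
        have hlog : Real.log ((a t).toReal * (b u).toReal / (p t u).toReal) =
            Real.log (a t).toReal + Real.log (b u).toReal - Real.log (p t u).toReal := by
          rw [Real.log_div (mul_pos haRp hbRp).ne' hpR.ne',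
            Real.log_mul haRp.ne' hbRp.ne']
        rw [hlog] at hls
        have hmul : (p t u).toReal * (Real.log (a t).toReal + Real.log (b u).toReal
            - Real.log (p t u).toReal) ≤ (p t u).toReal *
            ((a t).toReal * (b u).toReal / (p t u).toReal - 1) :=
          mul_le_mul_of_nonneg_left hls (le_of_lt hpR)
        have hqq : (p t u).toReal * ((a t).toReal * (b u).toReal / (p t u).toReal - 1) =
            (a t).toReal * (b u).toReal - (p t u).toReal := by
          field_simp
        rw [hqq] at hmul
        rw [Real.negMulLog]
        nlinarith
      have hnnl : 0 ≤ Real.negMulLog (p t u).toReal :=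
        Real.negMulLog_nonneg ENNReal.toReal_nonneg hp1
      have hca : 0 ≤ - Real.log (a t).toReal := by
        have := Real.log_nonpos ENNReal.toReal_nonneg ha1; linarith
      have hcb : 0 ≤ - Real.log (b u).toReal := by
        have := Real.log_nonpos ENNReal.toReal_nonneg hb1; linarith
      calc ee (p t u) + p t u
          = ENNReal.ofReal (Real.negMulLog (p t u).toReal + (p t u).toReal) := by
            rw [ENNReal.ofReal_add hnnl ENNReal.toReal_nonneg, ENNReal.ofReal_toReal (hfin t u)]
            rfl
        _ ≤ ENNReal.ofReal ((p t u).toReal * (- Real.log (a t).toReal) +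
              (p t u).toReal * (- Real.log (b u).toReal) +
              (a t).toReal * (b u).toReal) := ENNReal.ofReal_le_ofReal hreal
        _ = ENNReal.ofReal ((p t u).toReal * (- Real.log (a t).toReal)) +
              ENNReal.ofReal ((p t u).toReal * (- Real.log (b u).toReal)) + a t * b u := by
            rw [ENNReal.ofReal_add (by positivity) (by positivity),
              ENNReal.ofReal_add (by positivity) (by positivity)]
            congr 1
            rw [ENNReal.ofReal_mul ENNReal.toReal_nonneg,
              ENNReal.ofReal_toReal (hafin t), ENNReal.ofReal_toReal (hbfin u)]
  -- sum everything up
  have hsum_p : ∑' t : DA, ∑' u : DB, p t u = 1 := by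
    rw [tsum_congr (fun t => (ha t).symm)]
    exact hA1
  have hT1 : ∀ t : DA, ∑' u : DB, ENNReal.ofReal ((p t u).toReal * (- Real.log (a t).toReal)) =
      ee (a t) := by
    intro t
    have hca : 0 ≤ - Real.log (a t).toReal := by
      have h1 : (a t).toReal ≤ 1 := by
        rw [show (1:ℝ) = (1:ℝ≥0∞).toReal by simp]
        exact ENNReal.toReal_mono (by norm_num) prob_le_one
      have := Real.log_nonpos ENNReal.toReal_nonneg h1; linarith
    calc ∑' u : DB, ENNReal.ofReal ((p t u).toReal * (- Real.log (a t).toReal))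
        = ∑' u : DB, ENNReal.ofReal (- Real.log (a t).toReal) * p t u := by
          apply tsum_congr
          intro u
          rw [mul_comm ((p t u).toReal), ENNReal.ofReal_mul hca,
            ENNReal.ofReal_toReal (hfin t u)]
      _ = ENNReal.ofReal (- Real.log (a t).toReal) * ∑' u : DB, p t u :=
          ENNReal.tsum_mul_left
      _ = ENNReal.ofReal (- Real.log (a t).toReal) * ENNReal.ofReal (a t).toReal := by
          rw [← ha t, ENNReal.ofReal_toReal (hafin t)]
      _ = ee (a t) := by
          rw [← ENNReal.ofReal_mul hca, ee]
          congr 1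
          rw [Real.negMulLog]
          ring
  have hT2 : ∀ u : DB, ∑' t : DA, ENNReal.ofReal ((p t u).toReal * (- Real.log (b u).toReal)) =
      ee (b u) := by
    intro u
    have hcb : 0 ≤ - Real.log (b u).toReal := by
      have h1 : (b u).toReal ≤ 1 := by
        rw [show (1:ℝ) = (1:ℝ≥0∞).toReal by simp]
        exact ENNReal.toReal_mono (by norm_num) prob_le_one
      have := Real.log_nonpos ENNReal.toReal_nonneg h1; linarith
    calc ∑' t : DA, ENNReal.ofReal ((p t u).toReal * (- Real.log (b u).toReal))
        = ∑' t : DA, ENNReal.ofReal (- Real.log (b u).toReal) * p t u := by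
          apply tsum_congr
          intro t
          rw [mul_comm ((p t u).toReal), ENNReal.ofReal_mul hcb,
            ENNReal.ofReal_toReal (hfin t u)]
      _ = ENNReal.ofReal (- Real.log (b u).toReal) * ∑' t : DA, p t u :=
          ENNReal.tsum_mul_left
      _ = ENNReal.ofReal (- Real.log (b u).toReal) * ENNReal.ofReal (b u).toReal := by
          rw [← hb u, ENNReal.ofReal_toReal (hbfin u)]
      _ = ee (b u) := by
          rw [← ENNReal.ofReal_mul hcb, ee]
          congr 1
          rw [Real.negMulLog]
          ring
  have main : (∑' t : DA, ∑' u : DB, ee (p t u)) + 1 ≤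
      ((∑' t : DA, ee (a t)) + ∑' u : DB, ee (b u)) + 1 := by
    calc (∑' t : DA, ∑' u : DB, ee (p t u)) + 1
        = (∑' t : DA, ∑' u : DB, ee (p t u)) + ∑' t : DA, ∑' u : DB, p t u := by rw [hsum_p]
      _ = ∑' t : DA, ∑' u : DB, (ee (p t u) + p t u) := by
          rw [← ENNReal.tsum_add]
          apply tsum_congr
          intro t
          rw [← ENNReal.tsum_add]
      _ ≤ ∑' t : DA, ∑' u : DB,
            (ENNReal.ofReal ((p t u).toReal * (- Real.log (a t).toReal)) +
             ENNReal.ofReal ((p t u).toReal * (- Real.log (b u).toReal)) + a t * b u) :=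
          ENNReal.tsum_le_tsum (fun t => ENNReal.tsum_le_tsum (fun u => key t u))
      _ = (∑' t : DA, ∑' u : DB, ENNReal.ofReal ((p t u).toReal * (- Real.log (a t).toReal))) +
          (∑' t : DA, ∑' u : DB, ENNReal.ofReal ((p t u).toReal * (- Real.log (b u).toReal))) +
          ∑' t : DA, ∑' u : DB, a t * b u := by
          rw [← ENNReal.tsum_add, ← ENNReal.tsum_add]
          apply tsum_congr
          intro t
          rw [← ENNReal.tsum_add, ← ENNReal.tsum_add]
      _ = ((∑' t : DA, ee (a t)) + ∑' u : DB, ee (b u)) + 1 := by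
          congr 1
          · congr 1
            · exact tsum_congr hT1
            · rw [ENNReal.tsum_comm]
              exact tsum_congr hT2
          · calc ∑' t : DA, ∑' u : DB, a t * b u
                = ∑' t : DA, a t * ∑' u : DB, b u :=
                  tsum_congr (fun t => ENNReal.tsum_mul_left)
              _ = 1 := by
                  rw [hB1]
                  simp only [mul_one]
                  exact hA1
  exact (ENNReal.add_le_add_iff_right (by norm_num)).1 main

/-! ### Process-level lemmas -/


def qgrid (m : ℕ) : Set ℝ := Set.range (fun n : ℤ => (n : ℝ) / m)

lemma qgrid_countable (m : ℕ) : (qgrid m).Countable := countable_range _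

lemma quant_mem_qgrid (m : ℕ) (x : ℝ) : quant m x ∈ qgrid m := ⟨⌊(m:ℝ)*x⌋, rfl⟩

def blockCover (m k L : ℕ) : Set (Fin k → Fin L → ℝ) :=
  {q | ∀ j, ∀ i, q j i ∈ qgrid m}

lemma blockCover_countable (m k L : ℕ) : (blockCover m k L).Countable := by
  have h : blockCover m k L =
      {q : Fin k → Fin L → ℝ | ∀ j, q j ∈ {g : Fin L → ℝ | ∀ i, g i ∈ qgrid m}} := rfl
  rw [h]
  exact countable_pi (fun j => countable_pi (fun i => qgrid_countable m))

lemma blockQ_mem_cover {Ω : Type*} {L : ℕ} (m k : ℕ) (Y : ℤ → Ω → Fin L → ℝ) (ω : Ω) :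
    blockQ m k Y ω ∈ blockCover m k L :=
  fun j i => quant_mem_qgrid m _

lemma measurable_quant (m : ℕ) : Measurable (quant m) := by
  have h1 : Measurable (fun x : ℝ => ⌊(m:ℝ) * x⌋) := (measurable_const.mul measurable_id).floor
  have h2 : Measurable (fun n : ℤ => ((n:ℝ) / m)) := measurable_of_countable _
  exact h2.comp h1

lemma measurable_blockQ {Ω : Type*} [MeasurableSpace Ω] {L : ℕ} (m k : ℕ)
    (Y : ℤ → Ω → Fin L → ℝ) (h : ∀ t, Measurable (Y t)) : Measurable (blockQ m k Y) :=
  measurable_pi_lambda _ (fun j => measurable_pi_lambda _ (fun i =>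
    (measurable_quant m).comp ((measurable_pi_apply i).comp (h ((j : ℤ) + 1)))))

lemma pair_preimage_singleton {Ω T U : Type*} (A : Ω → T) (B : Ω → U) (s : T × U) :
    (fun ω => (A ω, B ω)) ⁻¹' {s} = A ⁻¹' {s.1} ∩ B ⁻¹' {s.2} := by
  ext ω; simp [Prod.ext_iff]

/-- Entropy of a shifted quantized block equals that of the unshifted one (stationarity). -/
lemma entropy_blockQ_shift {Ω : Type*} [MeasurableSpace Ω] (μ : Measure Ω) {L : ℕ}
    (X : ℤ → Ω → Fin L → ℝ) (hmeas : ∀ t, Measurable (X t))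
    (hstat : ∀ n : ℤ, μ.map (fun ω (t : ℤ) => X (t + n) ω) = μ.map (fun ω (t : ℤ) => X t ω))
    (m b : ℕ) (n : ℤ) :
    entropy μ (fun ω => fun (j : Fin b) (i : Fin L) => quant m (X ((j : ℤ) + 1 + n) ω i)) =
      entropy μ (blockQ m b X) := by
  set Φ : (ℤ → Fin L → ℝ) → (Fin b → Fin L → ℝ) :=
    fun y j i => quant m (y ((j : ℤ) + 1) i) with hΦdef
  have hΦ : Measurable Φ :=
    measurable_pi_lambda _ (fun j => measurable_pi_lambda _ (fun i =>
      (measurable_quant m).comp ((measurable_pi_apply i).comp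
        (measurable_pi_apply ((j : ℤ) + 1)))))
  have hF0 : Measurable (fun ω (t : ℤ) => X t ω) :=
    measurable_pi_lambda _ (fun t => hmeas t)
  have hFn : Measurable (fun ω (t : ℤ) => X (t + n) ω) :=
    measurable_pi_lambda _ (fun t => hmeas (t + n))
  rw [entropy_eq, entropy_eq]
  apply tsum_congr
  intro s
  have key : μ ((fun ω => fun (j : Fin b) (i : Fin L) =>
      quant m (X ((j : ℤ) + 1 + n) ω i)) ⁻¹' {s}) = μ (blockQ m b X ⁻¹' {s}) := by
    have h1 : (fun ω => fun (j : Fin b) (i : Fin L) => quant m (X ((j : ℤ) + 1 + n) ω i)) =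
        Φ ∘ (fun ω (t : ℤ) => X (t + n) ω) := rfl
    have h2 : blockQ m b X = Φ ∘ (fun ω (t : ℤ) => X t ω) := rfl
    rw [h1, h2, preimage_comp, preimage_comp,
      ← Measure.map_apply hFn (hΦ (measurableSet_singleton s)),
      ← Measure.map_apply hF0 (hΦ (measurableSet_singleton s)), hstat n]
  rw [key]

/-- Subadditivity of block entropies under stationarity. -/
lemma blockQ_entropy_subadd {Ω : Type*} [MeasurableSpace Ω] (μ : Measure Ω)
    [IsProbabilityMeasure μ] {L : ℕ} (X : ℤ → Ω → Fin L → ℝ) (hmeas : ∀ t, Measurable (X t))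
    (hstat : ∀ n : ℤ, μ.map (fun ω (t : ℤ) => X (t + n) ω) = μ.map (fun ω (t : ℤ) => X t ω))
    (m a b : ℕ) :
    entropy μ (blockQ m (a + b) X) ≤ entropy μ (blockQ m a X) + entropy μ (blockQ m b X) := by
  set Bs : Ω → Fin b → Fin L → ℝ :=
    fun ω j i => quant m (X ((j : ℤ) + 1 + (a : ℤ)) ω i) with hBsdef
  have hBsmeas : Measurable Bs :=
    measurable_pi_lambda _ (fun j => measurable_pi_lambda _ (fun i =>
      (measurable_quant m).comp ((measurable_pi_apply i).comp (hmeas _))))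
  have hBsmem : ∀ ω, Bs ω ∈ blockCover m b L := fun ω j i => quant_mem_qgrid m _
  have hQmeas := measurable_blockQ m a X hmeas
  set f : (Fin a → Fin L → ℝ) × (Fin b → Fin L → ℝ) → (Fin (a + b) → Fin L → ℝ) :=
    fun z j i => if h : (j : ℕ) < a then z.1 ⟨(j : ℕ), h⟩ i
      else z.2 ⟨(j : ℕ) - a, by omega⟩ i with hfdef
  have hcomp : blockQ m (a + b) X = fun ω => f (blockQ m a X ω, Bs ω) := by
    funext ω j i
    by_cases h : (j : ℕ) < a
    · simp only [hfdef, dif_pos h]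
      rfl
    · simp only [hfdef, dif_neg h]
      show quant m (X ((j : ℤ) + 1) ω i) = quant m (X ((((j : ℕ) - a : ℕ) : ℤ) + 1 + (a : ℤ)) ω i)
      congr 2
      omega
  rw [hcomp]
  have hZ : ∀ s : (Fin a → Fin L → ℝ) × (Fin b → Fin L → ℝ),
      MeasurableSet ((fun ω => (blockQ m a X ω, Bs ω)) ⁻¹' {s}) := by
    intro s
    rw [pair_preimage_singleton]
    exact (hQmeas (measurableSet_singleton _)).inter (hBsmeas (measurableSet_singleton _))
  calc entropy μ (fun ω => f (blockQ m a X ω, Bs ω))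
      ≤ entropy μ (fun ω => (blockQ m a X ω, Bs ω)) :=
        entropy_comp_le μ _ f ((blockCover_countable m a L).prod (blockCover_countable m b L))
          (fun ω => mk_mem_prod (blockQ_mem_cover m a X ω) (hBsmem ω)) hZ
    _ ≤ entropy μ (blockQ m a X) + entropy μ Bs :=
        entropy_pair_le_add μ _ _ (blockCover_countable m a L) (blockCover_countable m b L)
          (fun ω => blockQ_mem_cover m a X ω) hBsmem
          (fun t => hQmeas (measurableSet_singleton t))
          (fun u => hBsmeas (measurableSet_singleton u))
    _ = entropy μ (blockQ m a X) + entropy μ (blockQ m b X) := by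
        rw [entropy_blockQ_shift μ X hmeas hstat m b (a : ℤ)]

/-- Monotonicity: the first coordinate block has smaller entropy. -/
lemma blockQ_entropy_one_le {Ω : Type*} [MeasurableSpace Ω] (μ : Measure Ω)
    [IsProbabilityMeasure μ] {L : ℕ} (Y : ℤ → Ω → Fin L → ℝ) (hmeas : ∀ t, Measurable (Y t))
    (m k : ℕ) (hk : 0 < k) :
    entropy μ (blockQ m 1 Y) ≤ entropy μ (blockQ m k Y) := by
  set f : (Fin k → Fin L → ℝ) → (Fin 1 → Fin L → ℝ) := fun q j i => q ⟨0, hk⟩ i with hfdef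
  have hcomp : blockQ m 1 Y = fun ω => f (blockQ m k Y ω) := by
    funext ω j i
    show quant m (Y ((j : ℤ) + 1) ω i) = quant m (Y (((⟨0, hk⟩ : Fin k) : ℤ) + 1) ω i)
    congr 2
    have : (j : ℕ) = 0 := by omega
    simp [this]
  rw [hcomp]
  exact entropy_comp_le μ _ f (blockCover_countable m k L) (fun ω => blockQ_mem_cover m k Y ω)
    (fun t => measurable_blockQ m k Y hmeas (measurableSet_singleton t))

/-- Floor of a sum is the sum of floors plus a carry in `{0,1}`. -/
lemma floor_add_carry (x cc : ℝ) :
    ⌊x + cc⌋ = ⌊x⌋ + ⌊cc⌋ + (if ⌊x + cc⌋ = ⌊x⌋ + ⌊cc⌋ + 1 then (1 : ℤ) else 0) := by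
  have hlo : ⌊x⌋ + ⌊cc⌋ ≤ ⌊x + cc⌋ := by
    apply Int.le_floor.2
    push_cast
    exact add_le_add (Int.floor_le x) (Int.floor_le cc)
  have hhi : ⌊x + cc⌋ < ⌊x⌋ + ⌊cc⌋ + 2 := by
    apply Int.floor_lt.2
    push_cast
    have := Int.lt_floor_add_one x
    have := Int.lt_floor_add_one cc
    linarith
  by_cases h : ⌊x + cc⌋ = ⌊x⌋ + ⌊cc⌋ + 1
  · rw [if_pos h]; omega
  · rw [if_neg h]; omega

/-- Quantizing a translate: explicit carry decomposition. -/
lemma quant_add (m : ℕ) (x cc : ℝ) :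
    quant m (x + cc) = quant m x + (((⌊(m:ℝ) * cc⌋ : ℤ) : ℝ) +
      (if ⌊(m:ℝ) * x + (m:ℝ) * cc⌋ = ⌊(m:ℝ) * x⌋ + ⌊(m:ℝ) * cc⌋ + 1 then (1:ℝ) else 0)) / m := by
  have hm : (m:ℝ) * (x + cc) = (m:ℝ) * x + (m:ℝ) * cc := by ring
  rw [quant, quant, hm]
  by_cases h : ⌊(m:ℝ) * x + (m:ℝ) * cc⌋ = ⌊(m:ℝ) * x⌋ + ⌊(m:ℝ) * cc⌋ + 1
  · rw [if_pos h, h]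
    push_cast
    rw [← add_div]
    ring_nf
  · have h' : ⌊(m:ℝ) * x + (m:ℝ) * cc⌋ = ⌊(m:ℝ) * x⌋ + ⌊(m:ℝ) * cc⌋ := by
      have := floor_add_carry ((m:ℝ) * x) ((m:ℝ) * cc)
      rw [if_neg h] at this
      omega
    rw [if_neg h, h']
    push_cast
    rw [← add_div]
    ring_nf

section translate
variable {Ω : Type*} [MeasurableSpace Ω] (μ : Measure Ω) [IsProbabilityMeasure μ] {L : ℕ}

/-- The carry-bit process. -/
noncomputable def carryE {L : ℕ} (m k : ℕ) (Y : ℤ → Ω → Fin L → ℝ) (c : ℤ → Fin L → ℝ) :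
    Ω → Fin k → Fin L → Bool :=
  fun ω j i => decide (⌊(m:ℝ) * Y ((j : ℤ) + 1) ω i + (m:ℝ) * c ((j : ℤ) + 1) i⌋ =
    ⌊(m:ℝ) * Y ((j : ℤ) + 1) ω i⌋ + ⌊(m:ℝ) * c ((j : ℤ) + 1) i⌋ + 1)

lemma measurable_carryE (m k : ℕ) (Y : ℤ → Ω → Fin L → ℝ) (hY : ∀ t, Measurable (Y t))
    (c : ℤ → Fin L → ℝ) : Measurable (carryE (Ω := Ω) m k Y c) := by
  apply measurable_pi_lambda
  intro j
  apply measurable_pi_lambda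
  intro i
  have h1 : Measurable (fun ω => ⌊(m:ℝ) * Y ((j : ℤ) + 1) ω i + (m:ℝ) * c ((j : ℤ) + 1) i⌋) :=
    ((measurable_const.mul ((measurable_pi_apply i).comp (hY _))).add_const _).floor
  have h2 : Measurable (fun ω => ⌊(m:ℝ) * Y ((j : ℤ) + 1) ω i⌋) :=
    (measurable_const.mul ((measurable_pi_apply i).comp (hY _))).floor
  have h3 : Measurable (fun ω => (⌊(m:ℝ) * Y ((j : ℤ) + 1) ω i + (m:ℝ) * c ((j : ℤ) + 1) i⌋,
      ⌊(m:ℝ) * Y ((j : ℤ) + 1) ω i⌋)) := h1.prodMk h2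
  have heq : (fun ω => carryE (Ω := Ω) m k Y c ω j i) =
      (fun z : ℤ × ℤ => decide (z.1 = z.2 + ⌊(m:ℝ) * c ((j : ℤ) + 1) i⌋ + 1)) ∘
      (fun ω => (⌊(m:ℝ) * Y ((j : ℤ) + 1) ω i + (m:ℝ) * c ((j : ℤ) + 1) i⌋,
        ⌊(m:ℝ) * Y ((j : ℤ) + 1) ω i⌋)) := rfl
  rw [heq]
  exact (measurable_of_countable _).comp h3
end translate

lemma card_log_carry (k L : ℕ) :
    ENNReal.ofReal (Real.log (Fintype.card (Fin k → Fin L → Bool))) =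
      ENNReal.ofReal ((k * L : ℕ) * Real.log 2) := by
  congr 1
  have hcard : Fintype.card (Fin k → Fin L → Bool) = 2 ^ (k * L) := by
    simp [Fintype.card_fun]
    rw [mul_comm k L, pow_mul]
  rw [hcard]
  push_cast
  rw [Real.log_pow]
  push_cast
  ring

lemma blockQ_translate_le {Ω : Type*} [MeasurableSpace Ω] (μ : Measure Ω) [IsProbabilityMeasure μ]
    {L : ℕ} (Y : ℤ → Ω → Fin L → ℝ) (hY : ∀ t, Measurable (Y t)) (c : ℤ → Fin L → ℝ) (m k : ℕ) :
    entropy μ (blockQ m k (fun t ω i => Y t ω i + c t i)) ≤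
      entropy μ (blockQ m k Y) + ENNReal.ofReal ((k * L : ℕ) * Real.log 2) ∧
    entropy μ (blockQ m k Y) ≤
      entropy μ (blockQ m k (fun t ω i => Y t ω i + c t i)) +
        ENNReal.ofReal ((k * L : ℕ) * Real.log 2) := by
  set Y' : ℤ → Ω → Fin L → ℝ := fun t ω i => Y t ω i + c t i with hY'def
  have hY' : ∀ t, Measurable (Y' t) :=
    fun t => measurable_pi_lambda _ (fun i => ((measurable_pi_apply i).comp (hY t)).add_const _)
  set E := carryE (Ω := Ω) m k Y c with hEdef
  have hEmeas : Measurable E := measurable_carryE m k Y hY c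
  have hQmeas := measurable_blockQ (Ω := Ω) m k Y hY
  have hQ'meas := measurable_blockQ (Ω := Ω) m k Y' hY'
  have hpoint : ∀ ω j i, blockQ m k Y' ω j i = blockQ m k Y ω j i +
      (((⌊(m:ℝ) * c ((j : ℤ) + 1) i⌋ : ℤ) : ℝ) + (if E ω j i then (1:ℝ) else 0)) / m := by
    intro ω j i
    show quant m (Y ((j : ℤ) + 1) ω i + c ((j : ℤ) + 1) i) = _
    rw [quant_add m (Y ((j : ℤ) + 1) ω i) (c ((j : ℤ) + 1) i)]
    simp only [hEdef, carryE, decide_eq_true_eq]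
    rfl
  constructor
  · set f : (Fin k → Fin L → ℝ) × (Fin k → Fin L → Bool) → (Fin k → Fin L → ℝ) :=
      fun z j i => z.1 j i +
        (((⌊(m:ℝ) * c ((j : ℤ) + 1) i⌋ : ℤ) : ℝ) + (if z.2 j i then (1:ℝ) else 0)) / m with hfdef
    have hcomp : blockQ m k Y' = fun ω => f (blockQ m k Y ω, E ω) := by
      funext ω j i
      exact hpoint ω j i
    rw [hcomp, ← card_log_carry k L]
    have hZm : ∀ s : (Fin k → Fin L → ℝ) × (Fin k → Fin L → Bool),
        MeasurableSet ((fun ω => (blockQ m k Y ω, E ω)) ⁻¹' {s}) := by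
      intro s
      rw [pair_preimage_singleton]
      exact (hQmeas (measurableSet_singleton _)).inter (hEmeas (measurableSet_singleton _))
    calc entropy μ (fun ω => f (blockQ m k Y ω, E ω))
        ≤ entropy μ (fun ω => (blockQ m k Y ω, E ω)) :=
          entropy_comp_le μ _ f ((blockCover_countable m k L).prod (countable_univ))
            (fun ω => mk_mem_prod (blockQ_mem_cover m k Y ω) (mem_univ _)) hZm
      _ ≤ entropy μ (blockQ m k Y) +
            ENNReal.ofReal (Real.log (Fintype.card (Fin k → Fin L → Bool))) :=
          entropy_pair_le μ _ _ (blockCover_countable m k L)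
            (fun ω => blockQ_mem_cover m k Y ω)
            (fun t => hQmeas (measurableSet_singleton t))
            (fun e => hEmeas (measurableSet_singleton e))
  · set g : (Fin k → Fin L → ℝ) × (Fin k → Fin L → Bool) → (Fin k → Fin L → ℝ) :=
      fun z j i => z.1 j i -
        (((⌊(m:ℝ) * c ((j : ℤ) + 1) i⌋ : ℤ) : ℝ) + (if z.2 j i then (1:ℝ) else 0)) / m with hgdef
    have hcomp : blockQ m k Y = fun ω => g (blockQ m k Y' ω, E ω) := by
      funext ω j i
      show blockQ m k Y ω j i = blockQ m k Y' ω j i - _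
      rw [hpoint ω j i]
      ring
    rw [hcomp, ← card_log_carry k L]
    have hZm : ∀ s : (Fin k → Fin L → ℝ) × (Fin k → Fin L → Bool),
        MeasurableSet ((fun ω => (blockQ m k Y' ω, E ω)) ⁻¹' {s}) := by
      intro s
      rw [pair_preimage_singleton]
      exact (hQ'meas (measurableSet_singleton _)).inter (hEmeas (measurableSet_singleton _))
    calc entropy μ (fun ω => g (blockQ m k Y' ω, E ω))
        ≤ entropy μ (fun ω => (blockQ m k Y' ω, E ω)) :=
          entropy_comp_le μ _ g ((blockCover_countable m k L).prod (countable_univ))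
            (fun ω => mk_mem_prod (blockQ_mem_cover m k Y' ω) (mem_univ _)) hZm
      _ ≤ entropy μ (blockQ m k Y') +
            ENNReal.ofReal (Real.log (Fintype.card (Fin k → Fin L → Bool))) :=
          entropy_pair_le μ _ _ (blockCover_countable m k L)
            (fun ω => blockQ_mem_cover m k Y' ω)
            (fun t => hQ'meas (measurableSet_singleton t))
            (fun e => hEmeas (measurableSet_singleton e))

/-! ### Entropy rates and Fekete -/


section fekete
variable {Ω : Type*} [MeasurableSpace Ω] (μ : Measure Ω) [IsProbabilityMeasure μ] {L : ℕ}
  (X : ℤ → Ω → Fin L → ℝ)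

lemma fekete_tendsto (hmeas : ∀ t, Measurable (X t))
    (hstat : ∀ n : ℤ, μ.map (fun ω (t : ℤ) => X (t + n) ω) = μ.map (fun ω (t : ℤ) => X t ω))
    (m : ℕ) (hfin : entRate μ X m ≠ ∞) :
    Tendsto (fun k : ℕ => entropy μ (blockQ m (k + 1) X) / ((k : ℝ≥0∞) + 1)) atTop
      (𝓝 (entRate μ X m)) := by
  -- some block entropy is finite
  have hex : ∃ k0 : ℕ, entropy μ (blockQ m (k0 + 1) X) ≠ ∞ := by
    by_contra hcon
    push_neg at hcon
    apply hfin
    rw [entRate]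
    rw [iInf_eq_top]
    intro k
    rw [hcon k, ENNReal.top_div_of_ne_top
      (ENNReal.add_ne_top.2 ⟨ENNReal.natCast_ne_top k, ENNReal.one_ne_top⟩)]
  obtain ⟨k0, hk0⟩ := hex
  have h1fin : entropy μ (blockQ m 1 X) ≠ ∞ := by
    intro h
    apply hk0
    have := blockQ_entropy_one_le μ X hmeas m (k0 + 1) (Nat.succ_pos k0)
    rw [h] at this
    exact top_le_iff.1 this
  -- all block entropies are finite
  have hallfin : ∀ k : ℕ, entropy μ (blockQ m (k + 1) X) ≠ ∞ := by
    intro k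
    induction k with
    | zero => exact h1fin
    | succ n ih =>
      intro h
      have hsub := blockQ_entropy_subadd μ X hmeas hstat m (n + 1) 1
      rw [h] at hsub
      have : entropy μ (blockQ m (n + 1) X) + entropy μ (blockQ m 1 X) = ∞ :=
        top_le_iff.1 hsub
      rw [ENNReal.add_eq_top] at this
      rcases this with h' | h'
      · exact ih h'
      · exact h1fin h'
  set u : ℕ → ℝ := fun k => (entropy μ (blockQ m k X)).toReal with hudef
  have hu0 : ∀ k, 0 ≤ u k := fun k => ENNReal.toReal_nonneg
  have hufin : ∀ k, 1 ≤ k → entropy μ (blockQ m k X) ≠ ∞ := by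
    intro k hk
    obtain ⟨j, rfl⟩ := Nat.exists_eq_add_of_le hk
    rw [add_comm]
    exact hallfin j
  have hsub : Subadditive u := by
    intro a b
    rcases Nat.eq_zero_or_pos a with ha | ha
    · subst ha
      simp only [Nat.zero_add]
      exact le_add_of_nonneg_left (hu0 0)
    rcases Nat.eq_zero_or_pos b with hb | hb
    · subst hb
      simp only [Nat.add_zero]
      exact le_add_of_nonneg_right (hu0 0)
    have h := blockQ_entropy_subadd μ X hmeas hstat m a b
    have hane := hufin a ha
    have hbne := hufin b hb
    have habne : entropy μ (blockQ m a X) + entropy μ (blockQ m b X) ≠ ∞ :=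
      ENNReal.add_ne_top.2 ⟨hane, hbne⟩
    have := ENNReal.toReal_mono habne h
    rw [ENNReal.toReal_add hane hbne] at this
    exact this
  have hbdd : BddBelow (Set.range fun n => u n / n) := by
    refine ⟨0, ?_⟩
    rintro x ⟨n, rfl⟩
    have := hu0 n
    positivity
  have hlim := hsub.tendsto_lim hbdd
  -- identification of terms
  have hterm : ∀ k : ℕ, entropy μ (blockQ m (k + 1) X) / ((k : ℝ≥0∞) + 1) =
      ENNReal.ofReal (u (k + 1) / ((k : ℝ) + 1)) := by
    intro k
    rw [ENNReal.ofReal_div_of_pos (by positivity)]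
    rw [hudef]
    rw [ENNReal.ofReal_toReal (hallfin k)]
    congr 1
    rw [ENNReal.ofReal_add (by positivity) zero_le_one]
    simp
  have hlim' : entRate μ X m = ENNReal.ofReal hsub.lim := by
    have hlimdef : hsub.lim = sInf ((fun n => u n / (n : ℝ)) '' (Set.Ici 1)) := by rw [Subadditive.lim]
    apply le_antisymm
    · apply ENNReal.le_of_forall_pos_le_add
      intro ε hε _
      have hne : ((fun n => u n / (n : ℝ)) '' (Set.Ici 1)).Nonempty := ⟨_, ⟨1, by simp, rfl⟩⟩
      have hlt : sInf ((fun n => u n / (n : ℝ)) '' (Set.Ici 1)) < hsub.lim + ε := by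
        rw [← hlimdef]
        exact lt_add_of_pos_right _ (by exact_mod_cast hε)
      obtain ⟨x, ⟨n, hn, rfl⟩, hx⟩ := exists_lt_of_csInf_lt hne hlt
      obtain ⟨j, rfl⟩ := Nat.exists_eq_add_of_le hn
      rw [entRate]
      refine le_trans (iInf_le _ j) ?_
      rw [hterm j]
      calc ENNReal.ofReal (u (j + 1) / ((j : ℝ) + 1))
          = ENNReal.ofReal (u (1 + j) / ((1 + j : ℕ) : ℝ)) := by
            rw [add_comm 1 j]
            congr 2
            push_cast; ring
        _ ≤ ENNReal.ofReal (hsub.lim + ε) := ENNReal.ofReal_le_ofReal (le_of_lt hx)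
        _ ≤ ENNReal.ofReal hsub.lim + ε :=
            le_trans ENNReal.ofReal_add_le (le_of_eq (by rw [ENNReal.ofReal_coe_nnreal]))
    · rw [entRate]
      apply le_iInf
      intro k
      rw [hterm k]
      apply ENNReal.ofReal_le_ofReal
      have hmem : (fun n => u n / (n : ℝ)) (k + 1) ∈ (fun n => u n / (n : ℝ)) '' (Set.Ici 1) :=
        ⟨k + 1, by simp, rfl⟩
      have hbdd' : BddBelow ((fun n => u n / (n : ℝ)) '' (Set.Ici 1)) := by
        refine ⟨0, ?_⟩
        rintro x ⟨n, _, rfl⟩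
        have := hu0 n
        positivity
      have hle := csInf_le hbdd' hmem
      rw [← hlimdef] at hle
      calc hsub.lim ≤ u (k + 1) / ((k + 1 : ℕ) : ℝ) := hle
        _ = u (k + 1) / ((k : ℝ) + 1) := by push_cast; ring_nf
  rw [hlim']
  have heq : (fun k : ℕ => entropy μ (blockQ m (k + 1) X) / ((k : ℝ≥0∞) + 1)) =
      (fun k : ℕ => ENNReal.ofReal (u (k + 1) / ((k + 1 : ℕ) : ℝ))) := by
    funext k
    rw [hterm k]
    congr 2
    push_cast; ring
  rw [heq]
  exact (ENNReal.continuous_ofReal.tendsto _).comp (hlim.comp (tendsto_add_atTop_nat 1))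

end fekete


section assembly
variable {Ω : Type*} [MeasurableSpace Ω] (μ : Measure Ω) [IsProbabilityMeasure μ] {L : ℕ}

lemma blockQ_div_translate (Y : ℤ → Ω → Fin L → ℝ) (hY : ∀ t, Measurable (Y t))
    (c : ℤ → Fin L → ℝ) (m k : ℕ) :
    entropy μ (blockQ m (k + 1) (fun t ω i => Y t ω i + c t i)) / ((k : ℝ≥0∞) + 1) ≤
      entropy μ (blockQ m (k + 1) Y) / ((k : ℝ≥0∞) + 1) +
        ENNReal.ofReal ((L : ℝ) * Real.log 2) ∧
    entropy μ (blockQ m (k + 1) Y) / ((k : ℝ≥0∞) + 1) ≤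
      entropy μ (blockQ m (k + 1) (fun t ω i => Y t ω i + c t i)) / ((k : ℝ≥0∞) + 1) +
        ENNReal.ofReal ((L : ℝ) * Real.log 2) := by
  obtain ⟨h1, h2⟩ := blockQ_translate_le μ Y hY c m (k + 1)
  have hD : ENNReal.ofReal ((((k + 1) * L : ℕ) : ℝ) * Real.log 2) =
      ((k : ℝ≥0∞) + 1) * ENNReal.ofReal ((L : ℝ) * Real.log 2) := by
    have hr : (((k + 1) * L : ℕ) : ℝ) * Real.log 2 = ((k : ℝ) + 1) * ((L : ℝ) * Real.log 2) := by
      push_cast; ring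
    rw [hr, ENNReal.ofReal_mul (by positivity)]
    congr 1
    rw [ENNReal.ofReal_add (by positivity) zero_le_one]
    simp
  have hne0 : ((k : ℝ≥0∞) + 1) ≠ 0 := by simp
  have hnetop : ((k : ℝ≥0∞) + 1) ≠ ⊤ :=
    ENNReal.add_ne_top.2 ⟨ENNReal.natCast_ne_top k, ENNReal.one_ne_top⟩
  have hcancel : (((k : ℝ≥0∞) + 1) * ENNReal.ofReal ((L : ℝ) * Real.log 2)) / ((k : ℝ≥0∞) + 1) =
      ENNReal.ofReal ((L : ℝ) * Real.log 2) := by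
    rw [mul_comm, mul_div_assoc, ENNReal.div_self hne0 hnetop, mul_one]
  constructor
  · calc entropy μ (blockQ m (k + 1) (fun t ω i => Y t ω i + c t i)) / ((k : ℝ≥0∞) + 1)
        ≤ (entropy μ (blockQ m (k + 1) Y) +
            ENNReal.ofReal ((((k + 1) * L : ℕ) : ℝ) * Real.log 2)) / ((k : ℝ≥0∞) + 1) :=
          ENNReal.div_le_div_right h1 _
      _ = entropy μ (blockQ m (k + 1) Y) / ((k : ℝ≥0∞) + 1) +
            ENNReal.ofReal ((L : ℝ) * Real.log 2) := by
          rw [ENNReal.add_div, hD, hcancel]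
  · calc entropy μ (blockQ m (k + 1) Y) / ((k : ℝ≥0∞) + 1)
        ≤ (entropy μ (blockQ m (k + 1) (fun t ω i => Y t ω i + c t i)) +
            ENNReal.ofReal ((((k + 1) * L : ℕ) : ℝ) * Real.log 2)) / ((k : ℝ≥0∞) + 1) :=
          ENNReal.div_le_div_right h2 _
      _ = entropy μ (blockQ m (k + 1) (fun t ω i => Y t ω i + c t i)) / ((k : ℝ≥0∞) + 1) +
            ENNReal.ofReal ((L : ℝ) * Real.log 2) := by
          rw [ENNReal.add_div, hD, hcancel]

lemma claim1 (X : ℤ → Ω → Fin L → ℝ) (hmeas : ∀ t, Measurable (X t))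
    (hstat : ∀ n : ℤ, μ.map (fun ω (t : ℤ) => X (t + n) ω) = μ.map (fun ω (t : ℤ) => X t ω))
    (c : ℤ → Fin L → ℝ) (m : ℕ) :
    entRateSup μ (fun t ω i => X t ω i + c t i) m ≤
      entRate μ X m + ENNReal.ofReal ((L : ℝ) * Real.log 2) := by
  by_cases hB : entRate μ X m = ⊤
  · rw [hB, top_add]; exact le_top
  apply ENNReal.le_of_forall_pos_le_add
  intro ε hε _
  have hεne : ((ε : ℝ≥0∞)) ≠ 0 := by exact_mod_cast hε.ne'
  have hev := (fekete_tendsto μ X hmeas hstat m hB).eventually_lt_const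
    (ENNReal.lt_add_right hB hεne)
  rw [entRateSup]
  refine limsup_le_of_le (by isBoundedDefault) ?_
  filter_upwards [hev] with k hk
  calc entropy μ (blockQ m (k + 1) (fun t ω i => X t ω i + c t i)) / ((k : ℝ≥0∞) + 1)
      ≤ entropy μ (blockQ m (k + 1) X) / ((k : ℝ≥0∞) + 1) +
          ENNReal.ofReal ((L : ℝ) * Real.log 2) :=
        (blockQ_div_translate μ X hmeas c m k).1
    _ ≤ (entRate μ X m + (ε : ℝ≥0∞)) + ENNReal.ofReal ((L : ℝ) * Real.log 2) := by
        gcongr <;> exact le_of_lt hk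
    _ = entRate μ X m + ENNReal.ofReal ((L : ℝ) * Real.log 2) + (ε : ℝ≥0∞) := by ring

lemma claim2 (X : ℤ → Ω → Fin L → ℝ) (hmeas : ∀ t, Measurable (X t))
    (c : ℤ → Fin L → ℝ) (m : ℕ) :
    entRate μ X m ≤
      entRateSup μ (fun t ω i => X t ω i + c t i) m + ENNReal.ofReal ((L : ℝ) * Real.log 2) := by
  by_cases hA : entRateSup μ (fun t ω i => X t ω i + c t i) m = ⊤
  · rw [hA, top_add]; exact le_top
  apply ENNReal.le_of_forall_pos_le_add
  intro ε hε _
  have hεne : ((ε : ℝ≥0∞)) ≠ 0 := by exact_mod_cast hε.ne'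
  have hlt : Filter.limsup (fun k : ℕ =>
      entropy μ (blockQ m (k + 1) (fun t ω i => X t ω i + c t i)) / ((k : ℝ≥0∞) + 1)) atTop <
      entRateSup μ (fun t ω i => X t ω i + c t i) m + (ε : ℝ≥0∞) :=
    ENNReal.lt_add_right hA hεne
  obtain ⟨k, hk⟩ := (eventually_lt_of_limsup_lt hlt).exists
  calc entRate μ X m
      ≤ entropy μ (blockQ m (k + 1) X) / ((k : ℝ≥0∞) + 1) := iInf_le _ k
    _ ≤ entropy μ (blockQ m (k + 1) (fun t ω i => X t ω i + c t i)) / ((k : ℝ≥0∞) + 1) +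
          ENNReal.ofReal ((L : ℝ) * Real.log 2) := (blockQ_div_translate μ X hmeas c m k).2
    _ ≤ (entRateSup μ (fun t ω i => X t ω i + c t i) m + (ε : ℝ≥0∞)) +
          ENNReal.ofReal ((L : ℝ) * Real.log 2) := by
        gcongr <;> exact le_of_lt hk
    _ = entRateSup μ (fun t ω i => X t ω i + c t i) m +
          ENNReal.ofReal ((L : ℝ) * Real.log 2) + (ε : ℝ≥0∞) := by ring

end assembly

lemma tendsto_const_div_log (C : ℝ≥0∞) (hC : C ≠ ⊤) :
    Tendsto (fun m : ℕ => C / ENNReal.ofReal (Real.log m)) atTop (𝓝 0) := by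
  have hlogtop : Tendsto (fun m : ℕ => ENNReal.ofReal (Real.log m)) atTop (𝓝 ⊤) :=
    ENNReal.tendsto_ofReal_atTop.comp (Real.tendsto_log_atTop.comp tendsto_natCast_atTop_atTop)
  have := ENNReal.Tendsto.div (tendsto_const_nhds (x := C)) (Or.inr ENNReal.top_ne_zero) hlogtop
    (Or.inr hC)
  rwa [ENNReal.div_top] at this

lemma limsup_div_log_mono (f g : ℕ → ℝ≥0∞) (C : ℝ≥0∞) (hC : C ≠ ⊤) (h : ∀ m, f m ≤ g m + C) :
    Filter.limsup (fun m : ℕ => f m / ENNReal.ofReal (Real.log m)) atTop ≤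
      Filter.limsup (fun m : ℕ => g m / ENNReal.ofReal (Real.log m)) atTop := by
  set B := Filter.limsup (fun m : ℕ => g m / ENNReal.ofReal (Real.log m)) atTop with hBdef
  by_cases hB : B = ⊤
  · rw [hB]; exact le_top
  apply ENNReal.le_of_forall_pos_le_add
  intro ε hε _
  have hεne : ((ε : ℝ≥0∞)) ≠ 0 := by exact_mod_cast hε.ne'
  set δ : ℝ≥0∞ := (ε : ℝ≥0∞) / 2 with hδdef
  have hδ0 : 0 < δ := ENNReal.half_pos hεne
  have ev1 : ∀ᶠ m : ℕ in atTop, g m / ENNReal.ofReal (Real.log m) < B + δ :=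
    eventually_lt_of_limsup_lt (ENNReal.lt_add_right hB hδ0.ne')
  have ev2 : ∀ᶠ m : ℕ in atTop, C / ENNReal.ofReal (Real.log m) < δ :=
    (tendsto_const_div_log C hC).eventually_lt_const hδ0
  refine limsup_le_of_le (by isBoundedDefault) ?_
  filter_upwards [ev1, ev2] with m h1 h2
  calc f m / ENNReal.ofReal (Real.log m)
      ≤ (g m + C) / ENNReal.ofReal (Real.log m) := ENNReal.div_le_div_right (h m) _
    _ = g m / ENNReal.ofReal (Real.log m) + C / ENNReal.ofReal (Real.log m) :=
        ENNReal.add_div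
    _ ≤ (B + δ) + δ := add_le_add (le_of_lt h1) (le_of_lt h2)
    _ = B + (ε : ℝ≥0∞) := by rw [add_assoc, ENNReal.add_halves]

lemma liminf_div_log_mono (f g : ℕ → ℝ≥0∞) (C : ℝ≥0∞) (hC : C ≠ ⊤) (h : ∀ m, f m ≤ g m + C) :
    Filter.liminf (fun m : ℕ => f m / ENNReal.ofReal (Real.log m)) atTop ≤
      Filter.liminf (fun m : ℕ => g m / ENNReal.ofReal (Real.log m)) atTop := by
  set B := Filter.liminf (fun m : ℕ => g m / ENNReal.ofReal (Real.log m)) atTop with hBdef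
  by_cases hB : B = ⊤
  · rw [hB]; exact le_top
  apply ENNReal.le_of_forall_pos_le_add
  intro ε hε _
  have hεne : ((ε : ℝ≥0∞)) ≠ 0 := by exact_mod_cast hε.ne'
  set δ : ℝ≥0∞ := (ε : ℝ≥0∞) / 2 with hδdef
  have hδ0 : 0 < δ := ENNReal.half_pos hεne
  have fr1 : ∃ᶠ m : ℕ in atTop, g m / ENNReal.ofReal (Real.log m) < B + δ :=
    frequently_lt_of_liminf_lt (by isBoundedDefault) (ENNReal.lt_add_right hB hδ0.ne')
  have ev2 : ∀ᶠ m : ℕ in atTop, C / ENNReal.ofReal (Real.log m) < δ :=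
    (tendsto_const_div_log C hC).eventually_lt_const hδ0
  refine liminf_le_of_frequently_le ?_ (by isBoundedDefault)
  apply (fr1.and_eventually ev2).mono
  rintro m ⟨h1, h2⟩
  calc f m / ENNReal.ofReal (Real.log m)
      ≤ (g m + C) / ENNReal.ofReal (Real.log m) := ENNReal.div_le_div_right (h m) _
    _ = g m / ENNReal.ofReal (Real.log m) + C / ENNReal.ofReal (Real.log m) :=
        ENNReal.add_div
    _ ≤ (B + δ) + δ := add_le_add (le_of_lt h1) (le_of_lt h2)
    _ = B + (ε : ℝ≥0∞) := by rw [add_assoc, ENNReal.add_halves]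

/-- translation invariance: adding a deterministic sequence `{c_t}` to a
stationary process leaves the upper and lower information dimension rates unchanged,
where for the (possibly non-stationary) translated process the entropy rate is defined
with a limsup over the block length. -/
theorem stmt6 {Ω : Type*} [MeasurableSpace Ω] (μ : Measure Ω) [IsProbabilityMeasure μ]
    (L : ℕ) (X : ℤ → Ω → Fin L → ℝ) (hmeas : ∀ t, Measurable (X t))
    (hstat : Stationary μ X) (c : ℤ → Fin L → ℝ) :
    Filter.limsup (fun m : ℕ =>
        entRateSup μ (fun t ω i => X t ω i + c t i) m / ENNReal.ofReal (Real.log m)) atTop =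
      dimRateUpper μ X ∧
    Filter.liminf (fun m : ℕ =>
        entRateSup μ (fun t ω i => X t ω i + c t i) m / ENNReal.ofReal (Real.log m)) atTop =
      dimRateLower μ X := by
  have hC : ENNReal.ofReal ((L : ℝ) * Real.log 2) ≠ ⊤ := ENNReal.ofReal_ne_top
  have h1 : ∀ m : ℕ, entRateSup μ (fun t ω i => X t ω i + c t i) m ≤
      entRate μ X m + ENNReal.ofReal ((L : ℝ) * Real.log 2) :=
    fun m => claim1 μ X hmeas hstat c m
  have h2 : ∀ m : ℕ, entRate μ X m ≤ entRateSup μ (fun t ω i => X t ω i + c t i) m +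
      ENNReal.ofReal ((L : ℝ) * Real.log 2) :=
    fun m => claim2 μ X hmeas c m
  refine ⟨le_antisymm ?_ ?_, le_antisymm ?_ ?_⟩
  · exact limsup_div_log_mono _ _ _ hC h1
  · exact limsup_div_log_mono _ _ _ hC h2
  · exact liminf_div_log_mono _ _ _ hC h1
  · exact liminf_div_log_mono _ _ _ hC h2
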